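/- arXiv:2306.12887 — 2 statements merged into one kernel-verified Lean document; each statement's English description precedes it below -/
import Mathlib

section
/- Let S be a set of places of Q, F a number field, and T = M_F(S) the set of places of F over S. Then the restriction map ρ : J*(Q,S) → J*(F,T), ρ(c) = c restricted to J(F,T), is a vector space isomorphism between the spaces of consistent maps. Its inverse is given by [ρ^{-1}(c)](K,v) = Σ_{w|v} c(L,w) for any number field L containing both K and F. -/
/-! Consistency makes the fibre sum `Σ_{w∣v} c(L,w)` independent of the extension `L ⊇ K`:
fibres compose along towers, and any two extensions have a common one. Hence a consistent map
on `J(F,T)` extends to `J(ℚ,S)` by evaluating this sum in any `L` containing `K` and `F`, and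
consistency of the original map on either side shows extension and restriction are inverse. -/

/-- An abstract model of the collection of all number fields inside a fixed algebraic
closure `Q̄` of `ℚ`, ordered by inclusion `le`, together with, for each number field
`K`, its set `Pl K` of places and the restriction maps `res K L : Pl L → Pl K` sending a
place of `L ⊇ K` to the place of `K` below it (with finite fibers). -/
structure NumberFields where
  NF : Type
  le : NF → NF → Prop
  le_refl : ∀ K, le K K
  le_trans : ∀ {K L M}, le K L → le L M → le K M
  Q : NF
  Q_le : ∀ K, le Q K
  directed : ∀ K L, ∃ M, le K M ∧ le L M
  Pl : NF → Type
  res : ∀ (K L : NF), Pl L → Pl K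
  res_refl : ∀ K (v : Pl K), res K K v = v
  res_trans : ∀ {K L M}, le K L → le L M → ∀ x : Pl M, res K L (res L M x) = res K M x
  fiber_finite : ∀ {K L}, le K L → ∀ v : Pl K, {w : Pl L | res K L w = v}.Finite
  fiber_nonempty : ∀ {K L}, le K L → ∀ v : Pl K, ∃ w : Pl L, res K L w = v

namespace NumberFields

variable (P : NumberFields)

/-- `M_K(S)`: for a set `S` of places of `F` and a finite extension `K/F`, the set of
places of `K` dividing a place in `S`. -/
def MK (F : P.NF) (S : Set (P.Pl F)) (K : P.NF) : Set (P.Pl K) := {v | P.res F K v ∈ S}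

/-- `(K,v) ∈ J(F,S)`: `K` is a finite extension of `F` and `v ∈ M_K(S)`. -/
def MemJ (F : P.NF) (S : Set (P.Pl F)) (K : P.NF) (v : P.Pl K) : Prop :=
  P.le F K ∧ P.res F K v ∈ S

/-- The index set `J(F,S) = {(K,v) : K a finite extension of F, v ∈ M_K(S)}`. -/
def JT (F : P.NF) (S : Set (P.Pl F)) : Type :=
  {p : Σ K : P.NF, P.Pl K // P.MemJ F S p.1 p.2}

theorem liftJ {F : P.NF} {S : Set (P.Pl F)} {K L : P.NF} {v : P.Pl K}
    (m : P.MemJ F S K v) (h : P.le K L) {w : P.Pl L} (hw : P.res K L w = v) :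
    P.MemJ F S L w := by
  refine ⟨P.le_trans m.1 h, ?_⟩
  rw [← P.res_trans m.1 h, hw]
  exact m.2

/-- A map `c : J(F,S) → ℝ` is consistent if `c(K,v) = Σ_{w∣v} c(L,w)` for all
`(K,v) ∈ J(F,S)` and all finite extensions `L/K`. -/
def ConsistentJ (F : P.NF) (S : Set (P.Pl F)) (c : P.JT F S → ℝ) : Prop :=
  ∀ (K : P.NF) (v : P.Pl K) (m : P.MemJ F S K v) (L : P.NF) (h : P.le K L),
    c ⟨⟨K, v⟩, m⟩ = ∑ᶠ w : {w : P.Pl L // P.res K L w = v}, c ⟨⟨L, w.1⟩, P.liftJ m h w.2⟩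

/-- The space `J^*(F,S)` of consistent maps on `J(F,S)`. -/
def ConsistentJSub (F : P.NF) (S : Set (P.Pl F)) : Submodule ℝ (P.JT F S → ℝ) where
  carrier := {c | P.ConsistentJ F S c}
  add_mem' := by
    intro c d hc hd K v m L h
    haveI : Finite {w : P.Pl L // P.res K L w = v} := (P.fiber_finite h v).to_subtype
    show c ⟨⟨K, v⟩, m⟩ + d ⟨⟨K, v⟩, m⟩ = _
    rw [hc K v m L h, hd K v m L h,
      ← finsum_add_distrib (Set.finite_univ.subset (Set.subset_univ _))
        (Set.finite_univ.subset (Set.subset_univ _))]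
    rfl
  zero_mem' := by
    intro K v m L h
    show (0 : ℝ) = ∑ᶠ _ : {w : P.Pl L // P.res K L w = v}, (0 : ℝ)
    simp
  smul_mem' := by
    intro r c hc K v m L h
    haveI : Finite {w : P.Pl L // P.res K L w = v} := (P.fiber_finite h v).to_subtype
    show r * c ⟨⟨K, v⟩, m⟩ = _
    rw [hc K v m L h, mul_finsum _ _]
    rfl

theorem memJ_of_memJT {S : Set (P.Pl P.Q)} {F K : P.NF} {v : P.Pl K}
    (m : P.MemJ F (P.MK P.Q S F) K v) : P.MemJ P.Q S K v := by
  refine ⟨P.Q_le K, ?_⟩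
  have : P.res P.Q F (P.res F K v) ∈ S := m.2
  rwa [P.res_trans (P.Q_le F) m.1] at this

theorem memJT_of_above {S : Set (P.Pl P.Q)} {F K L : P.NF} {v : P.Pl K}
    (m : P.MemJ P.Q S K v) (hKL : P.le K L) (hFL : P.le F L) {w : P.Pl L}
    (hw : P.res K L w = v) : P.MemJ F (P.MK P.Q S F) L w := by
  refine ⟨hFL, ?_⟩
  show P.res P.Q F (P.res F L w) ∈ S
  rw [P.res_trans (P.Q_le F) hFL, ← P.res_trans m.1 hKL, hw]
  exact m.2

end NumberFields

theorem finsum_sigma_of_finite {α M : Type*} {β : α → Type*} [AddCommMonoid M] [Finite α]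
    [∀ a, Finite (β a)] (f : (Σ a, β a) → M) :
    ∑ᶠ p, f p = ∑ᶠ a, ∑ᶠ b, f ⟨a, b⟩ := by
  have := Fintype.ofFinite α
  have := fun a => Fintype.ofFinite (β a)
  simp only [finsum_eq_sum_of_fintype, ← Finset.univ_sigma_univ, Finset.sum_sigma]

namespace NumberFields

variable {P : NumberFields}

section Fibers

variable {K L M : P.NF} (hKL : P.le K L) (hLM : P.le L M) (v : P.Pl K)

def fiberSigmaEquiv :
    (Σ w : {w : P.Pl L // P.res K L w = v}, {x : P.Pl M // P.res L M x = w.1}) ≃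
      {x : P.Pl M // P.res K M x = v} where
  toFun p := ⟨p.2.1, by rw [← P.res_trans hKL hLM, p.2.2, p.1.2]⟩
  invFun x := ⟨⟨P.res L M x.1, by rw [P.res_trans hKL hLM, x.2]⟩, ⟨x.1, rfl⟩⟩
  left_inv := by
    rintro ⟨⟨w, hw⟩, x, hx⟩
    dsimp only at hx
    subst hx
    rfl
  right_inv _ := rfl

theorem finsum_fiber_eq_finsum_finsum (g : {x : P.Pl M // P.res K M x = v} → ℝ) :
    ∑ᶠ x, g x =
      ∑ᶠ w : {w : P.Pl L // P.res K L w = v},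
        ∑ᶠ x : {x : P.Pl M // P.res L M x = w.1},
          g ⟨x.1, by rw [← P.res_trans hKL hLM, x.2, w.2]⟩ := by
  have : Finite {w : P.Pl L // P.res K L w = v} := (P.fiber_finite hKL v).to_subtype
  have (w : P.Pl L) : Finite {x : P.Pl M // P.res L M x = w} := (P.fiber_finite hLM w).to_subtype
  rw [← finsum_comp_equiv (fiberSigmaEquiv hKL hLM v), finsum_sigma_of_finite]
  rfl

end Fibers

section Consistent

variable {F : P.NF} {T : Set (P.Pl F)} {c : P.JT F T → ℝ}

theorem ConsistentJ.finsum_fiber_eq_of_le (hc : P.ConsistentJ F T c) {K L M : P.NF}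
    (hKL : P.le K L) (hLM : P.le L M) (v : P.Pl K)
    (mL : ∀ w : P.Pl L, P.res K L w = v → P.MemJ F T L w)
    (mM : ∀ x : P.Pl M, P.res K M x = v → P.MemJ F T M x) :
    ∑ᶠ w : {w : P.Pl L // P.res K L w = v}, c ⟨⟨L, w.1⟩, mL w.1 w.2⟩ =
      ∑ᶠ x : {x : P.Pl M // P.res K M x = v}, c ⟨⟨M, x.1⟩, mM x.1 x.2⟩ := by
  rw [finsum_fiber_eq_finsum_finsum hKL hLM v]
  exact finsum_congr fun w => hc L w.1 (mL w.1 w.2) M hLM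

/-- Both sides equal the fibre sum in a common extension of `L` and `L'`. -/
theorem ConsistentJ.finsum_fiber_eq (hc : P.ConsistentJ F T c) {K L L' : P.NF}
    (hKL : P.le K L) (hKL' : P.le K L') (v : P.Pl K)
    (mL : ∀ w : P.Pl L, P.res K L w = v → P.MemJ F T L w)
    (mL' : ∀ w : P.Pl L', P.res K L' w = v → P.MemJ F T L' w) :
    ∑ᶠ w : {w : P.Pl L // P.res K L w = v}, c ⟨⟨L, w.1⟩, mL w.1 w.2⟩ =
      ∑ᶠ w : {w : P.Pl L' // P.res K L' w = v}, c ⟨⟨L', w.1⟩, mL' w.1 w.2⟩ := by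
  obtain ⟨M, hLM, hL'M⟩ := P.directed L L'
  have mM : ∀ x : P.Pl M, P.res K M x = v → P.MemJ F T M x := fun x hx =>
    P.liftJ (mL (P.res L M x) (by rw [P.res_trans hKL hLM, hx])) hLM rfl
  rw [hc.finsum_fiber_eq_of_le hKL hLM v mL mM, hc.finsum_fiber_eq_of_le hKL' hL'M v mL' mM]

end Consistent

noncomputable def join (K L : P.NF) : P.NF := (P.directed K L).choose

theorem le_join_left (K L : P.NF) : P.le K (join K L) := (P.directed K L).choose_spec.1

theorem le_join_right (K L : P.NF) : P.le L (join K L) := (P.directed K L).choose_spec.2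

def restrict {S : Set (P.Pl P.Q)} (F : P.NF) (c : P.JT P.Q S → ℝ) :
    P.JT F (P.MK P.Q S F) → ℝ :=
  fun j => c ⟨j.1, P.memJ_of_memJT j.2⟩

/-- `ρ⁻¹`, evaluated in the arbitrarily chosen common extension `join K F`; by `extend_eq`
any other common extension gives the same value. -/
noncomputable def extend (F : P.NF) (S : Set (P.Pl P.Q)) (c : P.JT F (P.MK P.Q S F) → ℝ) :
    P.JT P.Q S → ℝ := fun j =>
  ∑ᶠ w : {w : P.Pl (join j.1.1 F) // P.res j.1.1 (join j.1.1 F) w = j.1.2},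
    c ⟨⟨_, w.1⟩, P.memJT_of_above j.2 (le_join_left _ _) (le_join_right _ _) w.2⟩

variable {S : Set (P.Pl P.Q)} {F : P.NF}

theorem consistentJ_restrict {c : P.JT P.Q S → ℝ} (hc : P.ConsistentJ P.Q S c) :
    P.ConsistentJ F (P.MK P.Q S F) (restrict F c) :=
  fun K v m L h => hc K v (P.memJ_of_memJT m) L h

section Extend

variable {c : P.JT F (P.MK P.Q S F) → ℝ}

theorem extend_eq (hc : P.ConsistentJ F (P.MK P.Q S F) c) {K : P.NF} {v : P.Pl K}
    (m : P.MemJ P.Q S K v) {L : P.NF} (hKL : P.le K L) (hFL : P.le F L) :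
    extend F S c ⟨⟨K, v⟩, m⟩ =
      ∑ᶠ w : {w : P.Pl L // P.res K L w = v},
        c ⟨⟨L, w.1⟩, P.memJT_of_above m hKL hFL w.2⟩ :=
  hc.finsum_fiber_eq (le_join_left K F) hKL v
    (fun _ => P.memJT_of_above m (le_join_left K F) (le_join_right K F))
    (fun _ => P.memJT_of_above m hKL hFL)

theorem consistentJ_extend (hc : P.ConsistentJ F (P.MK P.Q S F) c) :
    P.ConsistentJ P.Q S (extend F S c) := by
  intro K v m K' hKK'
  obtain ⟨M, hK'M, hFM⟩ := P.directed K' F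
  rw [extend_eq hc m (P.le_trans hKK' hK'M) hFM,
    finsum_congr fun w => extend_eq hc (P.liftJ m hKK' w.2) hK'M hFM]
  exact finsum_fiber_eq_finsum_finsum hKK' hK'M v _

theorem restrict_extend (hc : P.ConsistentJ F (P.MK P.Q S F) c) :
    restrict F (extend F S c) = c := by
  funext ⟨⟨K, v⟩, m⟩
  exact (extend_eq hc _ (le_join_left K F) (le_join_right K F)).trans
    (hc K v m _ (le_join_left K F)).symm

end Extend

theorem extend_restrict {c : P.JT P.Q S → ℝ} (hc : P.ConsistentJ P.Q S c) :
    extend F S (restrict F c) = c := by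
  funext ⟨⟨K, v⟩, m⟩
  exact (hc K v m _ (le_join_left K F)).symm

/-- for `S` a set of places of `ℚ`, `F` a number field and
`T = M_F(S)`, the restriction map `ρ : J^*(ℚ,S) → J^*(F,T)` is a vector space
isomorphism, with inverse `[ρ⁻¹(c)](K,v) = Σ_{w∣v} c(L,w)` for any number field `L`
containing both `K` and `F`. -/
theorem stmt13 (S : Set (P.Pl P.Q)) (F : P.NF) :
    ∃ e : P.ConsistentJSub P.Q S ≃ₗ[ℝ] P.ConsistentJSub F (P.MK P.Q S F),
      (∀ (c : P.ConsistentJSub P.Q S) (j : P.JT F (P.MK P.Q S F)),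
        (e c).1 j = c.1 ⟨j.1, P.memJ_of_memJT j.2⟩) ∧
      (∀ (c : P.ConsistentJSub F (P.MK P.Q S F)) (K : P.NF) (v : P.Pl K)
          (m : P.MemJ P.Q S K v) (L : P.NF) (hKL : P.le K L) (hFL : P.le F L),
        (e.symm c).1 ⟨⟨K, v⟩, m⟩ =
          ∑ᶠ w : {w : P.Pl L // P.res K L w = v},
            c.1 ⟨⟨L, w.1⟩, P.memJT_of_above m hKL hFL w.2⟩) :=
  ⟨{ toFun := fun c => ⟨restrict F c.1, consistentJ_restrict c.2⟩
     invFun := fun c => ⟨extend F S c.1, consistentJ_extend c.2⟩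
     map_add' := fun _ _ => rfl
     map_smul' := fun _ _ => rfl
     left_inv := fun c => Subtype.ext (extend_restrict c.2)
     right_inv := fun c => Subtype.ext (restrict_extend c.2) },
    fun _ _ => rfl, fun c _ _ m _ hKL hFL => extend_eq c.2 m hKL hFL⟩

end NumberFields
end

section
/- If S is a proper subset of the places of Q (so X ⊊ Y), then the Q-linear space F = {f_α : α ∈ Q̄^×}, where f_α(x) = log‖α‖_x, is dense in LC_c(X) with respect to the L^1(λ) norm; whereas if S is the full set of places of Q, then F is dense in the subspace L_0 of λ-integral-zero functions. -/
/-!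
Off a single block `Y(ℚ,p₀)` one may change `g` freely without affecting the `L¹` distance
on `X` whenever `p₀ ∉ S`. Subtracting `(∫ g) · 𝟙_{Y(ℚ,p₀)}`, a function of the same kind since
`λ(Y(ℚ,p₀)) = 1`, makes the integral zero, so the Allcock–Vaaler theorem approximates the
modified function on all of `Y`, and hence `g` on `X`. When `S` contains every place, `X = Y`
and the Allcock–Vaaler theorem applies directly.
-/

open MeasureTheory

/-- An abstract model of the Allcock–Vaaler space `Y` of all places of `Q̄` with its
measure `λ = μ`, partitioned into the sets `Y(ℚ,p) = YQ p` over the places `p` of `ℚ`,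
together with the functions `f_α = (y ↦ log ‖α‖_y)` for `α ∈ Q̄^× = Alg`.  Each `f_α` is
locally constant with compact support and, by the product formula, has `λ`-integral
zero; the axiom `dense_AV` is the Allcock–Vaaler theorem that `α ↦ f_α` has dense image
in the integral-zero subspace of `L¹(Y,λ)`. -/
structure AVSystem (Y : Type) [TopologicalSpace Y] [MeasurableSpace Y] where
  μ : Measure Y
  PlQ : Type
  YQ : PlQ → Set Y
  YQ_nonempty : ∀ p, (YQ p).Nonempty
  YQ_disjoint : ∀ p q, p ≠ q → Disjoint (YQ p) (YQ q)
  YQ_cover : ⋃ p, YQ p = Set.univ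
  YQ_measurable : ∀ p, MeasurableSet (YQ p)
  YQ_isOpen : ∀ p, IsOpen (YQ p)
  YQ_isCompact : ∀ p, IsCompact (YQ p)
  μ_YQ : ∀ p, μ (YQ p) = 1
  Alg : Type
  falg : Alg → Y → ℝ
  falg_lc : ∀ α, IsLocallyConstant (falg α)
  falg_supp : ∀ α, HasCompactSupport (falg α)
  falg_integrable : ∀ α, Integrable (falg α) μ
  falg_integral_zero : ∀ α, ∫ y, falg α y ∂μ = 0
  dense_AV : ∀ g : Y → ℝ, Integrable g μ → (∫ y, g y ∂μ) = 0 →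
    ∀ ε > 0, ∃ α, (∫ y, |falg α y - g y| ∂μ) < ε

namespace AVSystem

variable {Y : Type} [TopologicalSpace Y] [MeasurableSpace Y] (A : AVSystem Y)

instance isFiniteMeasureOnCompacts : IsFiniteMeasureOnCompacts A.μ where
  lt_top_of_isCompact {K} hK := by
    obtain ⟨t, hKt⟩ := hK.elim_finite_subcover A.YQ A.YQ_isOpen (by simp [A.YQ_cover])
    calc A.μ K ≤ A.μ (⋃ p ∈ t, A.YQ p) := measure_mono hKt
      _ ≤ ∑ p ∈ t, A.μ (A.YQ p) := measure_biUnion_finset_le t A.YQ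
      _ < ⊤ := by simp [A.μ_YQ]

theorem integrable_of_isLocallyConstant [OpensMeasurableSpace Y] {g : Y → ℝ}
    (hlc : IsLocallyConstant g) (hcs : HasCompactSupport g) : Integrable g A.μ :=
  hlc.continuous.integrable_of_hasCompactSupport hcs

theorem integrable_indicator_YQ (p : A.PlQ) (c : ℝ) :
    Integrable ((A.YQ p).indicator fun _ => c) A.μ :=
  (integrable_indicator_iff (A.YQ_measurable p)).2 <|
    integrableOn_const (by simp [A.μ_YQ])

theorem integral_sub_indicator_YQ_eq_zero {g : Y → ℝ} (hg : Integrable g A.μ) (p : A.PlQ) :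
    ∫ y, (g y - (A.YQ p).indicator (fun _ => ∫ y, g y ∂A.μ) y) ∂A.μ = 0 := by
  rw [integral_sub hg (A.integrable_indicator_YQ p _),
    integral_indicator_const _ (A.YQ_measurable p), measureReal_def, A.μ_YQ]
  simp

theorem exists_setIntegral_compl_YQ_lt {g : Y → ℝ} (hg : Integrable g A.μ) (p : A.PlQ)
    {ε : ℝ} (hε : 0 < ε) :
    ∃ α, ∫ y in (A.YQ p)ᶜ, |A.falg α y - g y| ∂A.μ < ε := by
  set h : Y → ℝ := fun y => g y - (A.YQ p).indicator (fun _ => ∫ y, g y ∂A.μ) y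
  have hh : Integrable h A.μ := hg.sub (A.integrable_indicator_YQ p _)
  obtain ⟨α, hα⟩ := A.dense_AV h hh (A.integral_sub_indicator_YQ_eq_zero hg p) ε hε
  have hgh : Set.EqOn (fun y => |A.falg α y - g y|) (fun y => |A.falg α y - h y|) (A.YQ p)ᶜ :=
    fun y hy => by simp [h, Set.indicator_of_notMem hy]
  refine ⟨α, ?_⟩
  calc ∫ y in (A.YQ p)ᶜ, |A.falg α y - g y| ∂A.μ
      = ∫ y in (A.YQ p)ᶜ, |A.falg α y - h y| ∂A.μ :=
        setIntegral_congr_fun (A.YQ_measurable p).compl hgh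
    _ ≤ ∫ y, |A.falg α y - h y| ∂A.μ :=
        setIntegral_le_integral ((A.falg_integrable α).sub hh).abs
          (.of_forall fun _ => abs_nonneg _)
    _ < ε := hα

theorem exists_setIntegral_lt_of_disjoint_YQ {g : Y → ℝ} (hg : Integrable g A.μ) {X : Set Y}
    {p : A.PlQ} (hXp : Disjoint X (A.YQ p)) {ε : ℝ} (hε : 0 < ε) :
    ∃ α, ∫ y in X, |A.falg α y - g y| ∂A.μ < ε := by
  obtain ⟨α, hα⟩ := A.exists_setIntegral_compl_YQ_lt hg p hε
  refine ⟨α, lt_of_le_of_lt ?_ hα⟩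
  exact setIntegral_mono_set ((A.falg_integrable α).sub hg).abs.integrableOn
    (.of_forall fun _ => abs_nonneg _) (.of_forall hXp.subset_compl_right)

theorem disjoint_biUnion_YQ {S : Set A.PlQ} {p : A.PlQ} (hp : p ∉ S) :
    Disjoint (⋃ q ∈ S, A.YQ q) (A.YQ p) :=
  Set.disjoint_iUnion₂_left.2 fun q hq => A.YQ_disjoint q p (ne_of_mem_of_not_mem hq hp)

end AVSystem

theorem stmt18_general {Y : Type} [TopologicalSpace Y] [MeasurableSpace Y] [BorelSpace Y]
    (A : AVSystem Y) (S : Set A.PlQ) (g : Y → ℝ)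
    (hlc : IsLocallyConstant g) (hcs : HasCompactSupport g) :
    (S ≠ Set.univ → ∀ ε > 0, ∃ α : A.Alg,
      (∫ y in ⋃ p ∈ S, A.YQ p, |A.falg α y - g y| ∂A.μ) < ε) ∧
    (S = Set.univ → (∫ y in ⋃ p ∈ S, A.YQ p, g y ∂A.μ) = 0 → ∀ ε > 0, ∃ α : A.Alg,
      (∫ y in ⋃ p ∈ S, A.YQ p, |A.falg α y - g y| ∂A.μ) < ε) := by
  have hg := A.integrable_of_isLocallyConstant hlc hcs
  refine ⟨fun hS ε hε => ?_, fun hS hzero ε hε => ?_⟩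
  · obtain ⟨p, hp⟩ := (Set.ne_univ_iff_exists_notMem S).1 hS
    exact A.exists_setIntegral_lt_of_disjoint_YQ hg (A.disjoint_biUnion_YQ hp) hε
  · subst hS
    simp only [Set.biUnion_univ, A.YQ_cover, Measure.restrict_univ] at hzero ⊢
    exact A.dense_AV g hg hzero ε hε

/-- let `X = ⋃_{p ∈ S} Y(ℚ,p)` be the set of places over `S` and let
`F = {f_α : α ∈ Q̄^×}`.  If `S` is a proper subset of the places of `ℚ` (so `X ⊊ Y`),
then `F` is dense, for the `L¹(λ)` norm on `X`, in the space of locally constant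
compactly supported functions supported on `X`; if `S` is the full set of places, then
`F` is dense in the subspace `L₀` of such functions with `λ`-integral zero. -/
theorem stmt18 {Y : Type} [TopologicalSpace Y] [MeasurableSpace Y] [BorelSpace Y]
    (A : AVSystem Y) (S : Set A.PlQ) (g : Y → ℝ)
    (hlc : IsLocallyConstant g) (hcs : HasCompactSupport g)
    (hsupp : ∀ y : Y, g y ≠ 0 → y ∈ ⋃ p ∈ S, A.YQ p) :
    (S ≠ Set.univ → ∀ ε > 0, ∃ α : A.Alg,
      (∫ y in ⋃ p ∈ S, A.YQ p, |A.falg α y - g y| ∂A.μ) < ε) ∧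
    (S = Set.univ → (∫ y in ⋃ p ∈ S, A.YQ p, g y ∂A.μ) = 0 → ∀ ε > 0, ∃ α : A.Alg,
      (∫ y in ⋃ p ∈ S, A.YQ p, |A.falg α y - g y| ∂A.μ) < ε) :=
  stmt18_general A S g hlc hcs
end
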